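/- Let u : ℝ⁴ → ℝ be a smooth function satisfying the modified heavenly equation u_{13} = u_{12} u_{44} − u_{14} u_{24}, where u_{ij} = ∂²u/∂xⁱ∂xʲ. Then for every λ ∈ ℝ the vector fields X₁ = u_{14} ∂₂ − u_{12} ∂₄ + λ ∂₁ and X₂ = −∂₃ + u_{44} ∂₂ − u_{24} ∂₄ + λ ∂₄ commute. -/

import Mathlib

noncomputable def pd {n : ℕ} (i : Fin n) (f : (Fin n → ℝ) → ℝ) (p : Fin n → ℝ) : ℝ :=
  fderiv ℝ f p (Pi.single i 1)

noncomputable def lieBracket {n : ℕ} (X Y : (Fin n → ℝ) → (Fin n → ℝ)) (p : Fin n → ℝ) :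
    Fin n → ℝ :=
  fun i => (∑ j, X p j * pd j (fun q => Y q i) p) - (∑ j, Y p j * pd j (fun q => X q i) p)

lemma pd_contDiff {n : ℕ} {f : (Fin n → ℝ) → ℝ} (hf : ContDiff ℝ (⊤ : ℕ∞) f) (i : Fin n) :
    ContDiff ℝ (⊤ : ℕ∞) (pd i f) :=
  (hf.fderiv_right (by simp)).clm_apply contDiff_const

lemma pd_symm {n : ℕ} {f : (Fin n → ℝ) → ℝ} (hf : ContDiff ℝ (⊤ : ℕ∞) f) (i j : Fin n)
    (p : Fin n → ℝ) : pd i (pd j f) p = pd j (pd i f) p := by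
  have hsym : IsSymmSndFDerivAt ℝ f p :=
    (hf.contDiffAt).isSymmSndFDerivAt
      (by rw [minSmoothness_of_isRCLikeNormedField]; exact le_trans (b := ((2 : ℕ∞) : WithTop ℕ∞)) (by norm_cast) (WithTop.coe_le_coe.2 le_top))
  have hd : DifferentiableAt ℝ (fderiv ℝ f) p :=
    ((hf.fderiv_right (m := (⊤ : ℕ∞)) (by simp)).differentiable (by simp)).differentiableAt
  have key : ∀ a b : Fin n, pd a (pd b f) p =
      fderiv ℝ (fderiv ℝ f) p (Pi.single a 1) (Pi.single b 1) := by
    intro a b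
    rw [show pd a (pd b f) p
        = fderiv ℝ (fun q => (fderiv ℝ f q) (Pi.single b 1)) p (Pi.single a 1) from rfl]
    rw [fderiv_clm_apply hd (differentiableAt_const _)]
    simp
  rw [key i j, key j i, hsym]

lemma pd_congr {n : ℕ} {f g : (Fin n → ℝ) → ℝ} (h : ∀ q, f q = g q) (i : Fin n)
    (p : Fin n → ℝ) : pd i f p = pd i g p := by
  have : f = g := funext h
  rw [this]

lemma pd_const {n : ℕ} (c : ℝ) (i : Fin n) (p : Fin n → ℝ) :
    pd i (fun _ => c) p = 0 := by
  simp [pd]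

lemma pd_sub {n : ℕ} {f g : (Fin n → ℝ) → ℝ} {p : Fin n → ℝ}
    (hf : DifferentiableAt ℝ f p) (hg : DifferentiableAt ℝ g p) (i : Fin n) :
    pd i (fun q => f q - g q) p = pd i f p - pd i g p := by
  unfold pd; rw [fderiv_fun_sub hf hg]; simp

lemma pd_mul {n : ℕ} {f g : (Fin n → ℝ) → ℝ} {p : Fin n → ℝ}
    (hf : DifferentiableAt ℝ f p) (hg : DifferentiableAt ℝ g p) (i : Fin n) :
    pd i (fun q => f q * g q) p = pd i f p * g p + f p * pd i g p := by
  unfold pd; rw [fderiv_fun_mul hf hg]; simp; ring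

lemma pd_neg {n : ℕ} {f : (Fin n → ℝ) → ℝ} {p : Fin n → ℝ} (i : Fin n) :
    pd i (fun q => -f q) p = -pd i f p := by
  unfold pd; rw [fderiv_fun_neg]; simp

lemma pd_neg_add_const {n : ℕ} {f : (Fin n → ℝ) → ℝ} {p : Fin n → ℝ} (c : ℝ) (i : Fin n) :
    pd i (fun q => -f q + c) p = -pd i f p := by
  unfold pd; rw [fderiv_add_const, fderiv_fun_neg]; simp

/-- The Lax pair of the modified heavenly equation commutes on every solution. -/
theorem modified_heavenly_lax_pair_commutes
    (u : (Fin 4 → ℝ) → ℝ) (hu : ContDiff ℝ (⊤ : ℕ∞) u)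
    (heq : ∀ q : Fin 4 → ℝ,
      pd 0 (pd 2 u) q = pd 0 (pd 1 u) q * pd 3 (pd 3 u) q - pd 0 (pd 3 u) q * pd 1 (pd 3 u) q)
    (lam : ℝ) (X₁ X₂ : (Fin 4 → ℝ) → (Fin 4 → ℝ))
    (hX₁ : ∀ p : Fin 4 → ℝ, X₁ p = ![lam, pd 0 (pd 3 u) p, 0, -(pd 0 (pd 1 u) p)])
    (hX₂ : ∀ p : Fin 4 → ℝ, X₂ p = ![0, pd 3 (pd 3 u) p, -1, -(pd 1 (pd 3 u) p) + lam]) :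
    ∀ p : Fin 4 → ℝ, lieBracket X₁ X₂ p = 0 := by
  have hX₁' : X₁ = fun p => ![lam, pd 0 (pd 3 u) p, 0, -(pd 0 (pd 1 u) p)] := funext hX₁
  have hX₂' : X₂ = fun p => ![0, pd 3 (pd 3 u) p, -1, -(pd 1 (pd 3 u) p) + lam] := funext hX₂
  subst hX₁' hX₂'
  -- second derivatives are smooth
  have h2 : ∀ i j : Fin 4, ContDiff ℝ (⊤ : ℕ∞) (pd i (pd j u)) := fun i j =>
    pd_contDiff (pd_contDiff hu j) i
  have hd2 : ∀ (i j : Fin 4) (p : Fin 4 → ℝ), DifferentiableAt ℝ (pd i (pd j u)) p :=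
    fun i j p => ((h2 i j).differentiable (by simp)).differentiableAt
  -- derivative of the heavenly equation
  have dheq : ∀ (k : Fin 4) (p : Fin 4 → ℝ),
      pd k (pd 0 (pd 2 u)) p =
        pd k (pd 0 (pd 1 u)) p * pd 3 (pd 3 u) p + pd 0 (pd 1 u) p * pd k (pd 3 (pd 3 u)) p -
        (pd k (pd 0 (pd 3 u)) p * pd 1 (pd 3 u) p + pd 0 (pd 3 u) p * pd k (pd 1 (pd 3 u)) p) := by
    intro k p
    rw [pd_congr heq k p,
      pd_sub ((hd2 0 1 p).fun_mul (hd2 3 3 p)) ((hd2 0 3 p).fun_mul (hd2 1 3 p)) k,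
      pd_mul (hd2 0 1 p) (hd2 3 3 p) k, pd_mul (hd2 0 3 p) (hd2 1 3 p) k]
  -- Schwarz swaps
  have so : ∀ (a b c : Fin 4) (p : Fin 4 → ℝ),
      pd a (pd b (pd c u)) p = pd b (pd a (pd c u)) p := fun a b c p =>
    pd_symm (pd_contDiff hu c) a b p
  have si : ∀ (a b c : Fin 4) (p : Fin 4 → ℝ),
      pd a (pd b (pd c u)) p = pd a (pd c (pd b u)) p := fun a b c p =>
    pd_congr (fun q => pd_symm hu b c q) a p
  intro p
  funext i
  show (∑ j, _) - (∑ j, _) = (0 : Fin 4 → ℝ) i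
  fin_cases i <;>
    simp only [show ((⟨0, by omega⟩ : Fin 4)) = 0 from rfl,
      show ((⟨1, by omega⟩ : Fin 4)) = 1 from rfl,
      show ((⟨2, by omega⟩ : Fin 4)) = 2 from rfl,
      show ((⟨3, by omega⟩ : Fin 4)) = 3 from rfl,
      lieBracket, Fin.sum_univ_four, Matrix.cons_val_zero, Matrix.cons_val_one,
      Matrix.head_cons, Matrix.cons_val_two, Matrix.tail_cons, Matrix.cons_val_three,
      Fin.isValue, Pi.zero_apply]
  · -- component 0
    simp [pd_const]
  · -- component 1
    have e1 : pd 1 (pd 0 (pd 3 u)) p = pd 0 (pd 1 (pd 3 u)) p := so 1 0 3 p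
    have e2 : pd 3 (pd 0 (pd 3 u)) p = pd 0 (pd 3 (pd 3 u)) p := so 3 0 3 p
    have e3 : pd 3 (pd 0 (pd 1 u)) p = pd 0 (pd 1 (pd 3 u)) p := by
      rw [so 3 0 1 p, si 0 3 1 p]
    have e4 : pd 3 (pd 1 (pd 3 u)) p = pd 1 (pd 3 (pd 3 u)) p := so 3 1 3 p
    have e5 : pd 2 (pd 0 (pd 3 u)) p = pd 3 (pd 0 (pd 2 u)) p := by
      rw [so 2 0 3 p, si 0 2 3 p, so 0 3 2 p]
    have dh3 := dheq 3 p
    rw [e3, e2, e4] at dh3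
    rw [show (fun q => pd 3 (pd 3 u) q) = pd 3 (pd 3 u) from rfl,
      show (fun q => pd 0 (pd 3 u) q) = pd 0 (pd 3 u) from rfl]
    rw [e1, e2, e5, dh3]
    ring
  · -- component 2
    simp [pd_const]
  · -- component 3
    have f1 : pd 1 (pd 0 (pd 1 u)) p = pd 0 (pd 1 (pd 1 u)) p := so 1 0 1 p
    have f2 : pd 3 (pd 1 (pd 3 u)) p = pd 1 (pd 3 (pd 3 u)) p := so 3 1 3 p
    have f3 : pd 3 (pd 0 (pd 1 u)) p = pd 0 (pd 1 (pd 3 u)) p := by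
      rw [so 3 0 1 p, si 0 3 1 p]
    have f4 : pd 1 (pd 0 (pd 3 u)) p = pd 0 (pd 1 (pd 3 u)) p := so 1 0 3 p
    have f5 : pd 2 (pd 0 (pd 1 u)) p = pd 1 (pd 0 (pd 2 u)) p := by
      rw [so 2 0 1 p, si 0 2 1 p, so 0 1 2 p]
    have dh1 := dheq 1 p
    rw [f1, f4] at dh1
    simp only [pd_neg_add_const, pd_neg]
    rw [f2, f3, f5, dh1, f1]
    ring
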